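/- Let C be a k×l real matrix (1 ≤ l ≤ k) with every l×l submatrix nonsingular, let M be as in the norm estimate, and suppose ζ ∈ ℝ^l satisfies |ζ| ≤ M|(L*ζ)(i_a)| for a = l+1,...,k, where Q = {i_{l+1},...,i_k}. Suppose also |y_i| ∼ 1 for all i (meaning 1 ≤ |y_i| < 2). Then the absolute value J of the Jacobian determinant of the map (ζ, y_{i_{l+1}},...,y_{i_k}) ↦ (y_{i_1}(L*ζ)(i_1),...,y_{i_k}(L*ζ)(i_k)) satisfies J ≥ c·|ζ|^{k−l} for some constant c > 0 depending only on C and M. -/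
import Mathlib


open Finset

/-- Condition (*): every `l × l` submatrix of `C` is nonsingular. -/
def CondStar {k l : ℕ} (C : Matrix (Fin k) (Fin l) ℝ) : Prop :=
  ∀ e : Fin l → Fin k, Function.Injective e →
    (Matrix.of fun a j => C (e a) j).det ≠ 0

/-- The map `(ζ, y_{i_{l+1}},…,y_{i_k}) ↦ (y_{i_1}(L*ζ)(i_1),…,y_{i_k}(L*ζ)(i_k))`,
coded on `ℝ^k`: the first `l` coordinates of `v` are `ζ`, the rest are the
variables `y_{i_a}`; `σ` lists the indices `i_1,…,i_k`, `yfix` the fixed `y`'s. -/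
def Jmap {k l : ℕ} (hlk : l ≤ k) (C : Matrix (Fin k) (Fin l) ℝ)
    (σ : Equiv.Perm (Fin k)) (yfix : Fin k → ℝ) (v : Fin k → ℝ) : Fin k → ℝ :=
  fun a => (if (a : ℕ) < l then yfix (σ a) else v a) *
    ∑ j, C (σ a) j * v (Fin.castLE hlk j)

theorem stmt_5 (k l : ℕ) (hl : 1 ≤ l) (hlk : l ≤ k)
    (C : Matrix (Fin k) (Fin l) ℝ) (hC : CondStar C) (M : ℝ) :
    ∃ c > (0 : ℝ), ∀ (σ : Equiv.Perm (Fin k)) (yfix : Fin k → ℝ) (v : Fin k → ℝ),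
      -- the fixed parameters satisfy `|y_{i_a}| ∼ 1` for `a = 1,…,l`
      (∀ a : Fin k, (a : ℕ) < l → 1 ≤ |yfix (σ a)| ∧ |yfix (σ a)| < 2) →
      -- the variable coordinates satisfy `|y_{i_a}| ∼ 1` for `a = l+1,…,k`
      (∀ a : Fin k, l ≤ (a : ℕ) → 1 ≤ |v a| ∧ |v a| < 2) →
      -- `ζ ∈ F_Q` : `|ζ| ≤ M |(L*ζ)(i_a)|` for `a = l+1,…,k`
      (∀ a : Fin k, l ≤ (a : ℕ) →
        ‖(WithLp.equiv 2 (Fin l → ℝ)).symm fun j => v (Fin.castLE hlk j)‖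
          ≤ M * |∑ j, C (σ a) j * v (Fin.castLE hlk j)|) →
      |(fderiv ℝ (Jmap hlk C σ yfix) v).det|
        ≥ c * ‖(WithLp.equiv 2 (Fin l → ℝ)).symm fun j => v (Fin.castLE hlk j)‖ ^ (k - l) := by
  classical
  set m := k - l with hmdef
  have hkm : l + m = k := by omega
  set Sinj : Finset (Fin l → Fin k) := Finset.univ.filter (fun e => Function.Injective e) with hSinj
  have hne : Sinj.Nonempty :=
    ⟨Fin.castLE hlk, by simp [hSinj, Fin.castLE_injective]⟩
  set c0 := Sinj.inf' hne (fun e => |(Matrix.of fun a j => C (e a) j).det|) with hc0def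
  have hc0 : 0 < c0 := by
    rw [hc0def, Finset.lt_inf'_iff]
    intro e he
    rw [hSinj, Finset.mem_filter] at he
    exact abs_pos.mpr (hC e he.2)
  have hc0le : ∀ e : Fin l → Fin k, Function.Injective e →
      c0 ≤ |(Matrix.of fun a j => C (e a) j).det| := by
    intro e he
    exact Finset.inf'_le _ (by simp [hSinj, he])
  set M' := max M 1 with hM'def
  have hM' : (0:ℝ) < M' := lt_of_lt_of_le one_pos (le_max_right _ _)
  refine ⟨c0 / M' ^ m, by positivity, ?_⟩
  intro σ yfix v hy hv hζ
  set N0 : ℝ := ‖(WithLp.equiv 2 (Fin l → ℝ)).symm fun j => v (Fin.castLE hlk j)‖ with hN0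
  have hN0nn : 0 ≤ N0 := norm_nonneg _
  set Sval : Fin k → ℝ := fun a => ∑ j, C (σ a) j * v (Fin.castLE hlk j) with hSvaldef
  -- the projections and linear forms
  set Sc : Fin k → (Fin k → ℝ) →L[ℝ] ℝ :=
    fun a => ∑ j : Fin l, C (σ a) j • (ContinuousLinearMap.proj (Fin.castLE hlk j)) with hScdef
  have hScApp : ∀ (a : Fin k) (w : Fin k → ℝ),
      Sc a w = ∑ j, C (σ a) j * w (Fin.castLE hlk j) := by
    intro a w
    simp [hScdef, ContinuousLinearMap.sum_apply, smul_eq_mul]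
  set F' : Fin k → (Fin k → ℝ) →L[ℝ] ℝ := fun a =>
    if (a:ℕ) < l then yfix (σ a) • Sc a
    else v a • Sc a + Sval a • ContinuousLinearMap.proj a with hF'def
  have hder : HasFDerivAt (Jmap hlk C σ yfix) (ContinuousLinearMap.pi F') v := by
    rw [hasFDerivAt_pi']
    intro a
    rw [ContinuousLinearMap.proj_pi]
    by_cases ha : (a:ℕ) < l
    · have hfun : (fun w => Jmap hlk C σ yfix w a)
          = fun w : Fin k → ℝ => yfix (σ a) * Sc a w := by
        funext w; simp [Jmap, ha, hScApp]
      rw [hfun]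
      have hFa : F' a = yfix (σ a) • Sc a := by simp [hF'def, ha]
      show HasFDerivAt _ (F' a) v
      rw [hFa]
      exact ((Sc a).hasFDerivAt).const_mul _
    · have hfun : (fun w => Jmap hlk C σ yfix w a)
          = fun w : Fin k → ℝ => w a * Sc a w := by
        funext w; simp [Jmap, ha, hScApp]
      rw [hfun]
      have hFa : F' a = v a • Sc a + Sval a • ContinuousLinearMap.proj a := by
        simp [hF'def, ha]
      show HasFDerivAt _ (F' a) v
      rw [hFa]
      have h2 := (hasFDerivAt_apply (𝕜 := ℝ) a v).mul ((Sc a).hasFDerivAt)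
      have : Sc a v = Sval a := hScApp a v
      rwa [this] at h2
  -- the Jacobian matrix
  set ep : Fin l ⊕ Fin m ≃ Fin k := finSumFinEquiv.trans (finCongr hkm) with hepdef
  have hepl : ∀ i : Fin l, ep (Sum.inl i) = Fin.castLE hlk i := by
    intro i; apply Fin.ext; simp [hepdef]
  have hepr : ∀ i : Fin m, ((ep (Sum.inr i)) : ℕ) = l + i := by
    intro i; simp [hepdef]
  set A : Matrix (Fin l) (Fin l) ℝ :=
    Matrix.of fun i j => yfix (σ (ep (Sum.inl i))) * C (σ (ep (Sum.inl i))) j with hAdef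
  set Bm : Matrix (Fin m) (Fin l) ℝ :=
    Matrix.of fun i j => v (ep (Sum.inr i)) * C (σ (ep (Sum.inr i))) j with hBdef
  set Dm : Matrix (Fin m) (Fin m) ℝ :=
    Matrix.diagonal fun i => Sval (ep (Sum.inr i)) with hDdef
  set Jmat : Matrix (Fin k) (Fin k) ℝ :=
    (Matrix.fromBlocks A 0 Bm Dm).submatrix ep.symm ep.symm with hJdef
  have hlin : ((ContinuousLinearMap.pi F' : (Fin k → ℝ) →L[ℝ] (Fin k → ℝ)) :
      (Fin k → ℝ) →ₗ[ℝ] (Fin k → ℝ)) = Matrix.toLin' Jmat := by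
    apply LinearMap.ext; intro h
    funext a
    have hRHS : Matrix.toLin' Jmat h a = ∑ b, Jmat a b * h b := by
      simp [Matrix.toLin'_apply, Matrix.mulVec, dotProduct]
    have hsum : ∑ b, Jmat a b * h b
        = (∑ j : Fin l, Jmat a (ep (Sum.inl j)) * h (ep (Sum.inl j)))
          + ∑ i : Fin m, Jmat a (ep (Sum.inr i)) * h (ep (Sum.inr i)) := by
      rw [← Equiv.sum_comp ep (fun b => Jmat a b * h b), Fintype.sum_sum_type]
    have hJapp : ∀ s, Jmat a (ep s) = (Matrix.fromBlocks A 0 Bm Dm) (ep.symm a) s := by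
      intro s; simp [hJdef]
    rcases hs : ep.symm a with i | i
    · have hai : a = ep (Sum.inl i) := by rw [← hs, Equiv.apply_symm_apply]
      have hal : (a : ℕ) < l := by
        rw [hai, hepl]; simpa using i.isLt
      show (F' a) h = _
      have hFa : F' a = yfix (σ a) • Sc a := by simp [hF'def, hal]
      rw [hRHS, hsum, hFa]
      have : ∀ j : Fin l, Jmat a (ep (Sum.inl j)) = A i j := by
        intro j; rw [hJapp, hs]; rfl
      have h2 : ∀ i' : Fin m, Jmat a (ep (Sum.inr i')) = 0 := by
        intro i'; rw [hJapp, hs]; rfl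
      simp only [this, h2, zero_mul, Finset.sum_const_zero, add_zero]
      rw [ContinuousLinearMap.smul_apply, hScApp, smul_eq_mul, Finset.mul_sum]
      have hai' : a = Fin.castLE hlk i := by rw [hai, hepl]
      refine Finset.sum_congr rfl fun j _ => ?_
      simp only [hAdef, Matrix.of_apply, hepl, hai']
      ring
    · have hai : a = ep (Sum.inr i) := by rw [← hs, Equiv.apply_symm_apply]
      have hal : ¬ (a : ℕ) < l := by
        rw [hai]; simp [hepr i]
      show (F' a) h = _
      have hFa : F' a = v a • Sc a + Sval a • ContinuousLinearMap.proj a := by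
        simp [hF'def, hal]
      rw [hRHS, hsum, hFa]
      have h1 : ∀ j : Fin l, Jmat a (ep (Sum.inl j)) = Bm i j := by
        intro j; rw [hJapp, hs]; rfl
      have h2 : ∀ i' : Fin m, Jmat a (ep (Sum.inr i')) = Dm i i' := by
        intro i'; rw [hJapp, hs]; rfl
      simp only [h1, h2]
      have hd : ∑ i' : Fin m, Dm i i' * h (ep (Sum.inr i'))
          = Sval a * h a := by
        rw [hDdef]
        simp only [Matrix.diagonal_apply]
        rw [Finset.sum_eq_single i]
        · rw [if_pos rfl, hai]
        · intro b _ hb; rw [if_neg (Ne.symm hb), zero_mul]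
        · intro hb; exact absurd (Finset.mem_univ i) hb
      rw [hd]
      rw [ContinuousLinearMap.add_apply, ContinuousLinearMap.smul_apply,
        ContinuousLinearMap.smul_apply, hScApp, smul_eq_mul, smul_eq_mul,
        ContinuousLinearMap.proj_apply, Finset.mul_sum]
      congr 1
      refine Finset.sum_congr rfl fun j _ => ?_
      simp only [hBdef, Matrix.of_apply, hepl, ← hai]
      ring
  have hdet : |(fderiv ℝ (Jmap hlk C σ yfix) v).det| = |Jmat.det| := by
    rw [hder.fderiv]
    have : (ContinuousLinearMap.pi F').det
        = LinearMap.det ((ContinuousLinearMap.pi F' : (Fin k → ℝ) →L[ℝ] (Fin k → ℝ)) :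
            (Fin k → ℝ) →ₗ[ℝ] (Fin k → ℝ)) := rfl
    rw [this, hlin, LinearMap.det_toLin']
  rw [hdet, hJdef, Matrix.det_submatrix_equiv_self, Matrix.det_fromBlocks_zero₁₂]
  -- compute det A
  have hAfact : A = (Matrix.diagonal fun i => yfix (σ (ep (Sum.inl i)))) *
      (Matrix.of fun i j => C (σ (ep (Sum.inl i))) j) := by
    ext i j
    rw [Matrix.diagonal_mul]
    simp [hAdef]
  have hdetA : |A.det| = (∏ i, |yfix (σ (ep (Sum.inl i)))|) *
      |(Matrix.of fun i j => C (σ (ep (Sum.inl i))) j).det| := by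
    rw [hAfact, Matrix.det_mul, Matrix.det_diagonal, abs_mul, Finset.abs_prod]
  have hdetD : |Dm.det| = ∏ i, |Sval (ep (Sum.inr i))| := by
    rw [hDdef, Matrix.det_diagonal, Finset.abs_prod]
  rw [abs_mul, hdetA, hdetD]
  -- bounds
  have hyb : (1:ℝ) ≤ ∏ i, |yfix (σ (ep (Sum.inl i)))| := by
    have := Finset.prod_le_prod (s := Finset.univ) (f := fun _ : Fin l => (1:ℝ))
      (g := fun i => |yfix (σ (ep (Sum.inl i)))|) (fun i _ => zero_le_one)
      (fun i _ => (hy (ep (Sum.inl i)) (by rw [hepl]; simpa using i.isLt)).1)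
    simpa using this
  have heinj : Function.Injective (fun i : Fin l => σ (ep (Sum.inl i))) :=
    σ.injective.comp (ep.injective.comp Sum.inl_injective)
  have hdetb : c0 ≤ |(Matrix.of fun i j => C (σ (ep (Sum.inl i))) j).det| :=
    hc0le _ heinj
  have hSb : ∀ i : Fin m, N0 / M' ≤ |Sval (ep (Sum.inr i))| := by
    intro i
    have hge : l ≤ ((ep (Sum.inr i)) : ℕ) := by rw [hepr]; omega
    have := hζ (ep (Sum.inr i)) hge
    rw [div_le_iff₀ hM']
    calc N0 ≤ M * |Sval (ep (Sum.inr i))| := this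
      _ ≤ M' * |Sval (ep (Sum.inr i))| :=
        mul_le_mul_of_nonneg_right (le_max_left _ _) (abs_nonneg _)
      _ = |Sval (ep (Sum.inr i))| * M' := mul_comm _ _
  have hprodS : (N0 / M') ^ m ≤ ∏ i, |Sval (ep (Sum.inr i))| := by
    calc (N0 / M') ^ m = ∏ _i : Fin m, N0 / M' := by
          rw [Finset.prod_const, Finset.card_univ, Fintype.card_fin]
      _ ≤ ∏ i, |Sval (ep (Sum.inr i))| :=
          Finset.prod_le_prod (fun i _ => by positivity) (fun i _ => hSb i)
  have hfinal : c0 / M' ^ m * N0 ^ m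
      ≤ (∏ i, |yfix (σ (ep (Sum.inl i)))|) *
        |(Matrix.of fun i j => C (σ (ep (Sum.inl i))) j).det| *
        ∏ i, |Sval (ep (Sum.inr i))| := by
    have h1 : c0 / M' ^ m * N0 ^ m = c0 * (N0 / M') ^ m := by
      rw [div_pow]; ring
    rw [h1]
    calc c0 * (N0 / M') ^ m
        ≤ |(Matrix.of fun i j => C (σ (ep (Sum.inl i))) j).det| *
            ∏ i, |Sval (ep (Sum.inr i))| := by
          apply mul_le_mul hdetb hprodS (by positivity)
          exact le_trans hc0.le hdetb
      _ = 1 * (|(Matrix.of fun i j => C (σ (ep (Sum.inl i))) j).det| *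
            ∏ i, |Sval (ep (Sum.inr i))|) := (one_mul _).symm
      _ ≤ (∏ i, |yfix (σ (ep (Sum.inl i)))|) *
            (|(Matrix.of fun i j => C (σ (ep (Sum.inl i))) j).det| *
            ∏ i, |Sval (ep (Sum.inr i))|) := by
          apply mul_le_mul_of_nonneg_right hyb
          positivity
      _ = _ := by ring
  calc c0 / M' ^ m * N0 ^ m ≤ _ := hfinal
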